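/- arXiv:1811.01521 — 5 statements merged into one kernel-verified Lean document; each statement's English description precedes it below -/
import Mathlib

section
/- Let n ≥ m ≥ 1, let V ⊆ ℝ^m and W ⊆ ℝ^{n−m} be open sets with U = V × W, and let f̄ : V → ℝ^m be smooth. Define f : U → ℝ^m by f(v, w) = f̄(v). For each strictly increasing map I : Fin m → Fin n, let D_I : U → ℝ be the m×m minor determinant of the Jacobian matrix of f with columns selected by I, i.e. D_I(x) = det(∂f_i/∂x_{I(j)})_{1≤i,j≤m}. Then, in the commutative ring C^∞(U, ℝ) of smooth real-valued functions on U, the ideal generated by all the minors D_I equals the principal ideal generated by the single function λ(v, w) = det(Jacobian of f̄ at v). In particular, the Jacobi ideal of f is principal. -/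
/-!
Since `f = f̄ ∘ Prod.fst`, the Jacobian matrix of `f` at `(v, w)` is the block matrix
`(Jf̄(v) | 0)`. A strictly increasing choice of `m` columns either selects one of the last
`n - m` columns, which vanish, so the minor is `0`, or it is the choice of the first `m` columns,
whose minor is `λ`. Hence the generators of the Jacobi ideal are `λ` and `0`.
-/

/-- The commutative ring `C^∞(U, ℝ)` of smooth real-valued functions on a set
`U ⊆ E`, realized as the subring of `U → ℝ` (pointwise operations) consisting of
the functions admitting an extension which is `C^∞` on `U`. -/
def smoothFunctionsOn {E : Type*} [NormedAddCommGroup E] [NormedSpace ℝ E]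
    (U : Set E) : Subring (U → ℝ) where
  carrier := {g | ∃ G : E → ℝ, ContDiffOn ℝ (⊤ : ℕ∞) G U ∧ ∀ x : U, g x = G x}
  zero_mem' := ⟨0, contDiffOn_const, fun _ => rfl⟩
  one_mem' := ⟨1, contDiffOn_const, fun _ => rfl⟩
  add_mem' := by
    rintro g₁ g₂ ⟨G₁, hG₁, h₁⟩ ⟨G₂, hG₂, h₂⟩
    exact ⟨G₁ + G₂, hG₁.add hG₂, fun x => by simp [h₁ x, h₂ x]⟩
  mul_mem' := by
    rintro g₁ g₂ ⟨G₁, hG₁, h₁⟩ ⟨G₂, hG₂, h₂⟩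
    exact ⟨G₁ * G₂, hG₁.mul hG₂, fun x => by simp [h₁ x, h₂ x]⟩
  neg_mem' := by
    rintro g ⟨G, hG, h⟩
    exact ⟨-G, hG.neg, fun x => by simp [h x]⟩

theorem Ideal.span_eq_span_singleton_of_subset_insert_zero {α : Type*} [Semiring α]
    {S : Set α} {a : α} (hS : S ⊆ {0, a}) (ha : a ∈ S) :
    Ideal.span S = Ideal.span {a} :=
  le_antisymm ((Ideal.span_mono hS).trans_eq Ideal.span_insert_zero)
    (Ideal.span_le.2 (Set.singleton_subset_iff.2 (Ideal.subset_span ha)))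

theorem Fin.eq_castLE_or_exists_le_of_strictMono {m n : ℕ} (hmn : m ≤ n) {I : Fin m → Fin n}
    (hI : StrictMono I) : I = Fin.castLE hmn ∨ ∃ j, m ≤ (I j : ℕ) := by
  by_cases hlt : ∀ j, (I j : ℕ) < m
  · left
    have hid := StrictMono.eq_id (f := fun j => (⟨I j, hlt j⟩ : Fin m)) fun _ _ hab => hI hab
    funext j
    exact Fin.ext (by simpa using congrArg Fin.val (congrFun hid j))
  · right
    push Not at hlt
    exact hlt

section

variable {𝕜 : Type*} [NontriviallyNormedField 𝕜] {E : Type*} [NormedAddCommGroup E]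
  [NormedSpace 𝕜 E] {k : WithTop ℕ∞}

theorem ContDiffOn.matrix_det {ι : Type*} [Fintype ι] [DecidableEq ι] {s : Set E}
    {M : E → Matrix ι ι 𝕜} (hM : ∀ i j, ContDiffOn 𝕜 k (fun x => M x i j) s) :
    ContDiffOn 𝕜 k (fun x => (M x).det) s := by
  simp only [Matrix.det_apply]
  refine ContDiffOn.sum fun σ _ => ?_
  simpa only [Units.smul_def, zsmul_eq_mul] using
    contDiffOn_const.mul (contDiffOn_prod fun i _ => hM (σ i) i)

theorem ContDiffOn.det_jacobian {ι : Type*} [Fintype ι] [DecidableEq ι]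
    {g : (ι → 𝕜) → ι → 𝕜} {V : Set (ι → 𝕜)} {l : WithTop ℕ∞} (hg : ContDiffOn 𝕜 l g V)
    (hV : IsOpen V) (hkl : k + 1 ≤ l) :
    ContDiffOn 𝕜 k (fun v => (Matrix.of fun i j => fderiv 𝕜 g v (Pi.single j 1) i).det) V :=
  ContDiffOn.matrix_det fun i _ =>
    contDiffOn_pi.1 ((hg.fderiv_of_isOpen hV hkl).clm_apply contDiffOn_const) i

theorem fderiv_comp_fst_apply {F G : Type*} [NormedAddCommGroup F] [NormedSpace 𝕜 F]
    [NormedAddCommGroup G] [NormedSpace 𝕜 G] {g : E → G} {x : E × F}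
    (hg : DifferentiableAt 𝕜 g x.1) (v : E × F) :
    fderiv 𝕜 (fun p : E × F => g p.1) x v = fderiv 𝕜 g x.1 v.1 := by
  have hcomp : HasFDerivAt (fun p : E × F => g p.1)
      ((fderiv 𝕜 g x.1).comp (ContinuousLinearMap.fst 𝕜 E F)) x :=
    hg.hasFDerivAt.comp x hasFDerivAt_fst
  rw [hcomp.fderiv]
  rfl

end

section

variable {R : Type*} [Zero R] [One R] {m n : ℕ} (hmn : m ≤ n)

/-- The standard basis of `Rᵐ × R^(n-m)`; the indices `j < m` enumerate the `Rᵐ` factor. -/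
def prodStdBasis (j : Fin n) : (Fin m → R) × (Fin (n - m) → R) :=
  Sum.elim (fun i : Fin m => ((Pi.single i 1 : Fin m → R), 0))
    (fun i : Fin (n - m) => (0, (Pi.single i 1 : Fin (n - m) → R)))
    (finSumFinEquiv.symm (Fin.cast (Nat.add_sub_cancel' hmn).symm j))

theorem prodStdBasis_castLE (j : Fin m) :
    prodStdBasis (R := R) hmn (Fin.castLE hmn j) = (Pi.single j 1, 0) := by
  have hcast : Fin.cast (Nat.add_sub_cancel' hmn).symm (Fin.castLE hmn j)
      = Fin.castAdd (n - m) j := Fin.ext rfl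
  simp only [prodStdBasis, hcast, finSumFinEquiv_symm_apply_castAdd, Sum.elim_inl]

theorem prodStdBasis_fst_eq_zero {j : Fin n} (hj : m ≤ (j : ℕ)) :
    (prodStdBasis (R := R) hmn j).1 = 0 := by
  have hcast : Fin.cast (Nat.add_sub_cancel' hmn).symm j
      = Fin.natAdd m (⟨j - m, by omega⟩ : Fin (n - m)) := by
    ext
    simp only [Fin.val_cast, Fin.val_natAdd]
    omega
  simp only [prodStdBasis, hcast, finSumFinEquiv_symm_apply_natAdd, Sum.elim_inr]

end

section

variable {𝕜 : Type*} [NontriviallyNormedField 𝕜] {m n : ℕ} (hmn : m ≤ n)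
  {g : (Fin m → 𝕜) → Fin m → 𝕜} {x : (Fin m → 𝕜) × (Fin (n - m) → 𝕜)}

theorem det_fderiv_comp_fst_castLE (hg : DifferentiableAt 𝕜 g x.1) :
    (Matrix.of fun i j : Fin m =>
        fderiv 𝕜 (fun p => g p.1) x (prodStdBasis hmn (Fin.castLE hmn j)) i).det
      = (Matrix.of fun i j : Fin m => fderiv 𝕜 g x.1 (Pi.single j 1) i).det := by
  simp only [fderiv_comp_fst_apply hg, prodStdBasis_castLE]

theorem det_fderiv_comp_fst_eq_zero {I : Fin m → Fin n} {j₀ : Fin m} (hj₀ : m ≤ (I j₀ : ℕ))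
    (hg : DifferentiableAt 𝕜 g x.1) :
    (Matrix.of fun i j : Fin m =>
        fderiv 𝕜 (fun p => g p.1) x (prodStdBasis hmn (I j)) i).det = 0 :=
  Matrix.det_eq_zero_of_column_eq_zero j₀ fun i => by
    simp [fderiv_comp_fst_apply hg, prodStdBasis_fst_eq_zero hmn hj₀]

end

theorem stmt_4_general {n m : ℕ} (hmn : m ≤ n)
    (V : Set (Fin m → ℝ)) (W : Set (Fin (n - m) → ℝ))
    (hVopen : IsOpen V)
    (fbar : (Fin m → ℝ) → (Fin m → ℝ)) (hfbar : ContDiffOn ℝ (⊤ : ℕ∞) fbar V)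
    (f : (Fin m → ℝ) × (Fin (n - m) → ℝ) → (Fin m → ℝ))
    (hf : f = fun p => fbar p.1)
    -- `b j` is the `j`-th standard basis vector of `ℝⁿ = ℝᵐ × ℝ^(n-m)`
    (b : Fin n → (Fin m → ℝ) × (Fin (n - m) → ℝ))
    (hb : b = fun j =>
      Sum.elim (fun i : Fin m => ((Pi.single i 1 : Fin m → ℝ), 0))
        (fun i : Fin (n - m) => (0, (Pi.single i 1 : Fin (n - m) → ℝ)))
        (finSumFinEquiv.symm (Fin.cast (Nat.add_sub_cancel' hmn).symm j)))
    -- `D I` is the minor of the Jacobian matrix of `f` with columns `I`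
    (D : (Fin m → Fin n) → (V ×ˢ W : Set ((Fin m → ℝ) × (Fin (n - m) → ℝ))) → ℝ)
    (hD : D = fun (I : Fin m → Fin n)
        (x : (V ×ˢ W : Set ((Fin m → ℝ) × (Fin (n - m) → ℝ)))) =>
      (Matrix.of fun i j : Fin m => fderiv ℝ f x.val (b (I j)) i).det)
    -- `lam` is the Jacobian determinant of the reduction `f̄`, viewed on `U`
    (lam : (V ×ˢ W : Set ((Fin m → ℝ) × (Fin (n - m) → ℝ))) → ℝ)
    (hlam : lam = fun (x : (V ×ˢ W : Set ((Fin m → ℝ) × (Fin (n - m) → ℝ)))) =>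
      (Matrix.of fun i j : Fin m => fderiv ℝ fbar x.val.1 (Pi.single j 1) i).det) :
    ∃ lamS : smoothFunctionsOn (V ×ˢ W),
      (lamS : (V ×ˢ W : Set ((Fin m → ℝ) × (Fin (n - m) → ℝ))) → ℝ) = lam ∧
      (∀ I : Fin m → Fin n, StrictMono I →
        ∃ d : smoothFunctionsOn (V ×ˢ W),
          (d : (V ×ˢ W : Set ((Fin m → ℝ) × (Fin (n - m) → ℝ))) → ℝ) = D I) ∧
      Ideal.span {d : smoothFunctionsOn (V ×ˢ W) | ∃ I : Fin m → Fin n,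
          StrictMono I ∧ (d : (V ×ˢ W : Set ((Fin m → ℝ) × (Fin (n - m) → ℝ))) → ℝ) = D I}
        = Ideal.span {lamS} := by
  subst hf hb
  have hdiff : ∀ x ∈ V ×ˢ W, DifferentiableAt ℝ fbar x.1 := fun x hx =>
    (hfbar.contDiffAt (hVopen.mem_nhds hx.1)).differentiableAt (by simp)
  have hcastLE : D (Fin.castLE hmn) = lam := by
    rw [hD, hlam]
    funext x
    exact det_fderiv_comp_fst_castLE hmn (hdiff x x.2)
  have hcases : ∀ I, StrictMono I → D I = lam ∨ D I = 0 := by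
    intro I hI
    obtain rfl | ⟨j, hj⟩ := Fin.eq_castLE_or_exists_le_of_strictMono hmn hI
    · exact Or.inl hcastLE
    · rw [hD]
      exact Or.inr (funext fun x => det_fderiv_comp_fst_eq_zero hmn hj (hdiff x x.2))
  have hlamS : lam ∈ smoothFunctionsOn (V ×ˢ W) := by
    refine ⟨fun p => (Matrix.of fun i j : Fin m => fderiv ℝ fbar p.1 (Pi.single j 1) i).det,
      ?_, fun x => by rw [hlam]⟩
    exact (hfbar.det_jacobian hVopen (by exact_mod_cast le_top)).comp contDiffOn_fst
      fun _ hx => hx.1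
  refine ⟨⟨lam, hlamS⟩, rfl, fun I hI => ?_,
    Ideal.span_eq_span_singleton_of_subset_insert_zero ?_
      ⟨Fin.castLE hmn, Fin.strictMono_castLE hmn, hcastLE.symm⟩⟩
  · rcases hcases I hI with h | h
    exacts [⟨⟨lam, hlamS⟩, h.symm⟩, ⟨0, h.symm⟩]
  · rintro d ⟨I, hI, hd⟩
    rcases hcases I hI with h | h
    exacts [Or.inr (Subtype.ext (hd.trans h)), Or.inl (Subtype.ext (hd.trans h))]

/-- Let `n ≥ m ≥ 1`, `U = V ×ˢ W` with `V ⊆ ℝᵐ`, `W ⊆ ℝ^(n-m)` open,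
and let `f (v, w) = f̄ v` with `f̄ : V → ℝᵐ` smooth. Indexing the `n` coordinates of
`U ⊆ ℝᵐ × ℝ^(n-m)` by the basis vectors `b j`, and letting `D I` be the `m × m` minor
of the Jacobian of `f` with columns selected by a strictly increasing `I : Fin m → Fin n`,
then in the ring `C^∞(U, ℝ)` the ideal generated by all the minors `D I` equals the
principal ideal generated by `λ (v, w) = det (Jacobian of f̄ at v)`. In particular the
Jacobi ideal of `f` is principal. -/
theorem stmt_4 {n m : ℕ} (hm : 1 ≤ m) (hmn : m ≤ n)
    (V : Set (Fin m → ℝ)) (W : Set (Fin (n - m) → ℝ))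
    (hVopen : IsOpen V) (hWopen : IsOpen W)
    (fbar : (Fin m → ℝ) → (Fin m → ℝ)) (hfbar : ContDiffOn ℝ (⊤ : ℕ∞) fbar V)
    (f : (Fin m → ℝ) × (Fin (n - m) → ℝ) → (Fin m → ℝ))
    (hf : f = fun p => fbar p.1)
    -- `b j` is the `j`-th standard basis vector of `ℝⁿ = ℝᵐ × ℝ^(n-m)`
    (b : Fin n → (Fin m → ℝ) × (Fin (n - m) → ℝ))
    (hb : b = fun j =>
      Sum.elim (fun i : Fin m => ((Pi.single i 1 : Fin m → ℝ), 0))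
        (fun i : Fin (n - m) => (0, (Pi.single i 1 : Fin (n - m) → ℝ)))
        (finSumFinEquiv.symm (Fin.cast (Nat.add_sub_cancel' hmn).symm j)))
    -- `D I` is the minor of the Jacobian matrix of `f` with columns `I`
    (D : (Fin m → Fin n) → (V ×ˢ W : Set ((Fin m → ℝ) × (Fin (n - m) → ℝ))) → ℝ)
    (hD : D = fun (I : Fin m → Fin n)
        (x : (V ×ˢ W : Set ((Fin m → ℝ) × (Fin (n - m) → ℝ)))) =>
      (Matrix.of fun i j : Fin m => fderiv ℝ f x.val (b (I j)) i).det)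
    -- `lam` is the Jacobian determinant of the reduction `f̄`, viewed on `U`
    (lam : (V ×ˢ W : Set ((Fin m → ℝ) × (Fin (n - m) → ℝ))) → ℝ)
    (hlam : lam = fun (x : (V ×ˢ W : Set ((Fin m → ℝ) × (Fin (n - m) → ℝ)))) =>
      (Matrix.of fun i j : Fin m => fderiv ℝ fbar x.val.1 (Pi.single j 1) i).det) :
    ∃ lamS : smoothFunctionsOn (V ×ˢ W),
      (lamS : (V ×ˢ W : Set ((Fin m → ℝ) × (Fin (n - m) → ℝ))) → ℝ) = lam ∧
      (∀ I : Fin m → Fin n, StrictMono I →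
        ∃ d : smoothFunctionsOn (V ×ˢ W),
          (d : (V ×ˢ W : Set ((Fin m → ℝ) × (Fin (n - m) → ℝ))) → ℝ) = D I) ∧
      Ideal.span {d : smoothFunctionsOn (V ×ˢ W) | ∃ I : Fin m → Fin n,
          StrictMono I ∧ (d : (V ×ˢ W : Set ((Fin m → ℝ) × (Fin (n - m) → ℝ))) → ℝ) = D I}
        = Ideal.span {lamS} :=
  stmt_4_general hmn V W hVopen fbar hfbar f hf b hb D hD lam hlam
end

section
/- Let m ≥ 1, let U be an open neighborhood of 0 in ℝ^m, and let g = (g₁, …, g_m) : U → ℝ^m be a continuous map. Suppose there exist a natural number k ≥ 1 and continuous functions a_{ij} : U → ℝ (for 1 ≤ i, j ≤ m) such that (x_i)^k = Σ_{j=1}^m a_{ij}(x)·g_j(x) for all x ∈ U and all i. Then there exist constants C > 0 and ε > 0 such that ‖x‖^k ≤ C·‖g(x)‖ for all x with ‖x‖ ≤ ε. -/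
/-!
On a closed ball `B ⊆ U` around `0` the coefficients `a i j` are bounded, say by `A`, so each
identity `(x i)^k = ∑ j, a i j x * g x j` gives `|x i|^k ≤ m A ‖g x‖`. Applied to a coordinate
of maximal modulus, for which `‖x‖ ≤ √m |x i|`, this yields `‖x‖^k ≤ √m^k m A ‖g x‖`.
-/

open Metric

namespace EuclideanSpace

variable {ι : Type*} [Fintype ι]

theorem norm_le_sqrt_card_mul {x : EuclideanSpace ℝ ι} {r : ℝ} (hr : 0 ≤ r)
    (hx : ∀ i, |x i| ≤ r) : ‖x‖ ≤ √(Fintype.card ι) * r := by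
  have hsum : ∑ i, ‖x i‖ ^ 2 ≤ Fintype.card ι * r ^ 2 := by
    calc ∑ i, ‖x i‖ ^ 2 ≤ ∑ _i : ι, r ^ 2 := Finset.sum_le_sum fun i _ => by
          simpa only [Real.norm_eq_abs] using pow_le_pow_left₀ (abs_nonneg (x i)) (hx i) 2
      _ = Fintype.card ι * r ^ 2 := by simp
  calc ‖x‖ = √(∑ i, ‖x i‖ ^ 2) := EuclideanSpace.norm_eq x
    _ ≤ √(Fintype.card ι * r ^ 2) := Real.sqrt_le_sqrt hsum
    _ = √(Fintype.card ι) * r := by rw [Real.sqrt_mul (Nat.cast_nonneg _), Real.sqrt_sq hr]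

theorem abs_sum_mul_apply_le {c : ι → ℝ} {A : ℝ} (hc : ∀ j, |c j| ≤ A)
    (y : EuclideanSpace ℝ ι) : |∑ j, c j * y j| ≤ Fintype.card ι * A * ‖y‖ := by
  calc |∑ j, c j * y j| ≤ ∑ j, |c j| * |y j| := by
        simpa only [abs_mul] using Finset.abs_sum_le_sum_abs (fun j => c j * y j) Finset.univ
    _ ≤ ∑ _j : ι, A * ‖y‖ := Finset.sum_le_sum fun j _ =>
        mul_le_mul (hc j) (by simpa only [Real.norm_eq_abs] using PiLp.norm_apply_le y j)
          (abs_nonneg _) ((abs_nonneg _).trans (hc j))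
    _ = Fintype.card ι * A * ‖y‖ := by simp [mul_assoc]

end EuclideanSpace

theorem stmt_5_general {m : ℕ} (hm : 1 ≤ m)
    (U : Set (EuclideanSpace ℝ (Fin m))) (hUopen : IsOpen U)
    (h0 : (0 : EuclideanSpace ℝ (Fin m)) ∈ U)
    (g : EuclideanSpace ℝ (Fin m) → EuclideanSpace ℝ (Fin m))
    (k : ℕ)
    (a : Fin m → Fin m → EuclideanSpace ℝ (Fin m) → ℝ)
    (ha : ∀ i j, ContinuousOn (a i j) U)
    (heq : ∀ x ∈ U, ∀ i : Fin m, (x i) ^ k = ∑ j : Fin m, a i j x * g x j) :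
    ∃ C > (0 : ℝ), ∃ ε > (0 : ℝ), Metric.closedBall (0 : EuclideanSpace ℝ (Fin m)) ε ⊆ U ∧
      ∀ x : EuclideanSpace ℝ (Fin m), ‖x‖ ≤ ε → ‖x‖ ^ k ≤ C * ‖g x‖ := by
  have : Nonempty (Fin m) := ⟨⟨0, hm⟩⟩
  obtain ⟨ε, hε, hεU⟩ := nhds_basis_closedBall.mem_iff.mp (hUopen.mem_nhds h0)
  have hcoeff : ContinuousOn (fun x i j => a i j x) (closedBall 0 ε) :=
    continuousOn_pi.mpr fun i => continuousOn_pi.mpr fun j => (ha i j).mono hεU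
  obtain ⟨A, hA⟩ := (isCompact_closedBall 0 ε).exists_bound_of_continuousOn hcoeff
  have hA0 : 0 ≤ A := (norm_nonneg _).trans (hA 0 (mem_closedBall_self hε.le))
  refine ⟨√m ^ k * (m * (A + 1)), by positivity, ε, hε, hεU, fun x hx => ?_⟩
  have hxU : x ∈ U := hεU (mem_closedBall_zero_iff.mpr hx)
  obtain ⟨i, hi⟩ := Finite.exists_max fun i => |x i|
  have hbound : ∀ i j, |a i j x| ≤ A + 1 := fun i j =>
    calc |a i j x| ≤ ‖fun i j => a i j x‖ := by
          simpa only [Real.norm_eq_abs] using (norm_le_pi_norm (fun j => a i j x) j).trans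
            (norm_le_pi_norm (fun i j => a i j x) i)
      _ ≤ A + 1 := (hA x (mem_closedBall_zero_iff.mpr hx)).trans (by linarith)
  have hcoord : |x i| ^ k ≤ m * (A + 1) * ‖g x‖ := by
    rw [← abs_pow, heq x hxU i]
    simpa only [Fintype.card_fin] using EuclideanSpace.abs_sum_mul_apply_le (hbound i) (g x)
  have hnorm : ‖x‖ ≤ √m * |x i| := by
    simpa using EuclideanSpace.norm_le_sqrt_card_mul (abs_nonneg (x i)) hi
  calc ‖x‖ ^ k ≤ (√m * |x i|) ^ k := by gcongr
    _ = √m ^ k * |x i| ^ k := mul_pow _ _ _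
    _ ≤ √m ^ k * (m * (A + 1) * ‖g x‖) := by gcongr
    _ = √m ^ k * (m * (A + 1)) * ‖g x‖ := by ring

/-- Łojasiewicz-type estimate for a K-finite germ. If on a neighborhood
`U` of `0 ∈ ℝᵐ` one has `(x i)^k = ∑ j, a i j x * g x j` with continuous coefficients
`a i j` and continuous `g`, then there are `C > 0` and `ε > 0` such that
`‖x‖^k ≤ C * ‖g x‖` for all `x` with `‖x‖ ≤ ε`. -/
theorem stmt_5 {m : ℕ} (hm : 1 ≤ m)
    (U : Set (EuclideanSpace ℝ (Fin m))) (hUopen : IsOpen U)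
    (h0 : (0 : EuclideanSpace ℝ (Fin m)) ∈ U)
    (g : EuclideanSpace ℝ (Fin m) → EuclideanSpace ℝ (Fin m))
    (hg : ContinuousOn g U)
    (k : ℕ) (hk : 1 ≤ k)
    (a : Fin m → Fin m → EuclideanSpace ℝ (Fin m) → ℝ)
    (ha : ∀ i j, ContinuousOn (a i j) U)
    (heq : ∀ x ∈ U, ∀ i : Fin m, (x i) ^ k = ∑ j : Fin m, a i j x * g x j) :
    ∃ C > (0 : ℝ), ∃ ε > (0 : ℝ), Metric.closedBall (0 : EuclideanSpace ℝ (Fin m)) ε ⊆ U ∧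
      ∀ x : EuclideanSpace ℝ (Fin m), ‖x‖ ≤ ε → ‖x‖ ^ k ≤ C * ‖g x‖ :=
  stmt_5_general hm U hUopen h0 g k a ha heq
end

section
/- Let m ≥ 1, let U be an open neighborhood of 0 in ℝ^m, and let g = (g₁, …, g_m) : U → ℝ^m be a continuous map. Suppose there exist a natural number k ≥ 1 and continuous functions a_{ij} : U → ℝ (for 1 ≤ i, j ≤ m) such that (x_i)^k = Σ_{j=1}^m a_{ij}(x)·g_j(x) for all x ∈ U and all i. Then: (1) 0 is an isolated point of the zero set g⁻¹(0), i.e. there is ε > 0 such that g(x) ≠ 0 whenever 0 < ‖x‖ ≤ ε; and (2) there is ε > 0 such that for every open neighborhood W′ of 0 in ℝ^m there exists δ > 0 with {x : ‖x‖ ≤ ε and ‖g(x)‖ < δ} ⊆ W′. -/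
/-!
Evaluating the identity `(x i)^k = ∑ j, a i j x * g x j` at a zero of `g` forces every `(x i)^k`,
hence every coordinate, to vanish: `0` is the only zero of `g` in `U`. For a closed ball
`K ⊆ U` around `0` and an open `W' ∋ 0`, the continuous function `‖g‖` is then positive on
the compact set `K \ W'`, so it has a positive lower bound `δ` there, and `‖g x‖ < δ`
forces `x ∈ W'`.
-/

theorem EuclideanSpace.eq_zero_of_pow_eq_sum_mul {ι κ : Type*} [Fintype κ] {k : ℕ}
    {x : EuclideanSpace ℝ ι} {y : EuclideanSpace ℝ κ} (c : ι → κ → ℝ)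
    (h : ∀ i, x i ^ k = ∑ j, c i j * y j) (hy : y = 0) : x = 0 := by
  ext i
  exact eq_zero_of_pow_eq_zero (by simpa [hy] using h i)

theorem IsCompact.exists_pos_forall_mem_of_norm_lt {X E : Type*} [TopologicalSpace X]
    [NormedAddGroup E] {K W : Set X} {g : X → E} (hK : IsCompact K) (hg : ContinuousOn g K)
    (hW : IsOpen W) (hzero : ∀ x ∈ K, g x = 0 → x ∈ W) :
    ∃ δ > 0, ∀ x ∈ K, ‖g x‖ < δ → x ∈ W := by
  have hpos : ∀ x ∈ K \ W, 0 < ‖g x‖ := fun x hx =>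
    norm_pos_iff.2 fun hgx => hx.2 (hzero x hx.1 hgx)
  obtain ⟨δ, hδ, hbound⟩ :=
    (hK.diff hW).exists_forall_le' (hg.mono Set.sdiff_subset).norm hpos
  exact ⟨δ, hδ, fun x hx hgx => by_contra fun hxW => (hbound x ⟨hx, hxW⟩).not_gt hgx⟩

theorem stmt_6_general {m : ℕ}
    (U : Set (EuclideanSpace ℝ (Fin m))) (hUopen : IsOpen U)
    (h0 : (0 : EuclideanSpace ℝ (Fin m)) ∈ U)
    (g : EuclideanSpace ℝ (Fin m) → EuclideanSpace ℝ (Fin m))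
    (hg : ContinuousOn g U)
    (k : ℕ)
    (a : Fin m → Fin m → EuclideanSpace ℝ (Fin m) → ℝ)
    (heq : ∀ x ∈ U, ∀ i : Fin m, (x i) ^ k = ∑ j : Fin m, a i j x * g x j) :
    (∃ ε > (0 : ℝ), Metric.closedBall (0 : EuclideanSpace ℝ (Fin m)) ε ⊆ U ∧
      ∀ x : EuclideanSpace ℝ (Fin m), 0 < ‖x‖ → ‖x‖ ≤ ε → g x ≠ 0) ∧
    (∃ ε > (0 : ℝ), Metric.closedBall (0 : EuclideanSpace ℝ (Fin m)) ε ⊆ U ∧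
      ∀ W' : Set (EuclideanSpace ℝ (Fin m)), IsOpen W' → 0 ∈ W' →
        ∃ δ > (0 : ℝ), ∀ x : EuclideanSpace ℝ (Fin m), ‖x‖ ≤ ε → ‖g x‖ < δ → x ∈ W') := by
  obtain ⟨ε, hε, hεU⟩ := Metric.nhds_basis_closedBall.mem_iff.1 (hUopen.mem_nhds h0)
  have hzero : ∀ x ∈ U, g x = 0 → x = 0 := fun x hx hgx =>
    EuclideanSpace.eq_zero_of_pow_eq_sum_mul (fun i j => a i j x) (heq x hx) hgx
  refine ⟨⟨ε, hε, hεU, fun x hx hxε hgx => hx.ne' ?_⟩, ⟨ε, hε, hεU, fun W' hW' hW'0 => ?_⟩⟩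
  · rw [hzero x (hεU (mem_closedBall_zero_iff.2 hxε)) hgx, norm_zero]
  · obtain ⟨δ, hδ, hW⟩ := (isCompact_closedBall 0 ε).exists_pos_forall_mem_of_norm_lt
      (hg.mono hεU) hW' fun x hx hgx => hzero x (hεU hx) hgx ▸ hW'0
    exact ⟨δ, hδ, fun x hx => hW x (mem_closedBall_zero_iff.2 hx)⟩

/-- For a K-finite germ `g` at `0 ∈ ℝᵐ` (concretely: each `(x i)^k` is a
continuous-coefficient combination of the components of `g` near `0`):
(1) `0` is an isolated zero of `g`, and (2) preimages of sufficiently small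
neighborhoods of `0` in the target are contained in any prescribed neighborhood
`W'` of `0` in the source. -/
theorem stmt_6 {m : ℕ} (hm : 1 ≤ m)
    (U : Set (EuclideanSpace ℝ (Fin m))) (hUopen : IsOpen U)
    (h0 : (0 : EuclideanSpace ℝ (Fin m)) ∈ U)
    (g : EuclideanSpace ℝ (Fin m) → EuclideanSpace ℝ (Fin m))
    (hg : ContinuousOn g U)
    (k : ℕ) (hk : 1 ≤ k)
    (a : Fin m → Fin m → EuclideanSpace ℝ (Fin m) → ℝ)
    (ha : ∀ i j, ContinuousOn (a i j) U)
    (heq : ∀ x ∈ U, ∀ i : Fin m, (x i) ^ k = ∑ j : Fin m, a i j x * g x j) :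
    (∃ ε > (0 : ℝ), Metric.closedBall (0 : EuclideanSpace ℝ (Fin m)) ε ⊆ U ∧
      ∀ x : EuclideanSpace ℝ (Fin m), 0 < ‖x‖ → ‖x‖ ≤ ε → g x ≠ 0) ∧
    (∃ ε > (0 : ℝ), Metric.closedBall (0 : EuclideanSpace ℝ (Fin m)) ε ⊆ U ∧
      ∀ W' : Set (EuclideanSpace ℝ (Fin m)), IsOpen W' → 0 ∈ W' →
        ∃ δ > (0 : ℝ), ∀ x : EuclideanSpace ℝ (Fin m), ‖x‖ ≤ ε → ‖g x‖ < δ → x ∈ W') :=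
  stmt_6_general U hUopen h0 g hg k a heq
end

section
/- Let U be an open neighborhood of 0 in ℝ³ and let ξ = (ξ₁, ξ₂, ξ₃) : U → ℝ³ be a continuous map such that ξ₁(x)·x₁ + ξ₂(x)·x₂ + ξ₃(x)·x₃ = 0 for all x = (x₁, x₂, x₃) ∈ U. Then ξ(0) = 0. In particular, there is no continuous nowhere-vanishing vector field ξ near 0 in ℝ³ satisfying the identity ⟨ξ(x), x⟩ = 0 on a neighborhood of 0. -/
/-!
Evaluate the orthogonality identity along the ray `t • ξ 0`: for `t ≠ 0` it gives
`⟪ξ (t • ξ 0), ξ 0⟫ = 0`, and letting `t → 0` continuity yields `‖ξ 0‖² = 0`.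
-/

open Filter Topology
open scoped RealInnerProductSpace

theorem eq_zero_of_inner_self_apply_eventually_eq_zero {E : Type*}
    [NormedAddCommGroup E] [InnerProductSpace ℝ E] {ξ : E → E} (hξ : ContinuousAt ξ 0)
    (horth : ∀ᶠ x in 𝓝 0, ⟪ξ x, x⟫ = 0) : ξ 0 = 0 := by
  set c := ξ 0
  have hline : Tendsto (fun t : ℝ => t • c) (𝓝[≠] 0) (𝓝 0) :=
    ((continuous_id.smul continuous_const).tendsto' 0 0 (zero_smul ℝ c)).mono_left
      nhdsWithin_le_nhds
  have hzero : ∀ᶠ t in 𝓝[≠] (0 : ℝ), ⟪ξ (t • c), c⟫ = 0 := by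
    filter_upwards [hline.eventually horth, self_mem_nhdsWithin] with t ht ht0
    rw [inner_smul_right] at ht
    exact (mul_eq_zero.mp ht).resolve_left ht0
  have hlim : Tendsto (fun t : ℝ => ⟪ξ (t • c), c⟫) (𝓝[≠] 0) (𝓝 ⟪c, c⟫) :=
    (hξ.tendsto.comp hline).inner tendsto_const_nhds
  exact inner_self_eq_zero.mp <| tendsto_nhds_unique hlim <|
    tendsto_const_nhds.congr' (hzero.mono fun _ h => h.symm)

/-- If `ξ` is a continuous vector field on a neighborhood `U` of `0` in `ℝ³`
with `ξ₁(x)x₁ + ξ₂(x)x₂ + ξ₃(x)x₃ = 0` on `U`, then `ξ(0) = 0`; in particular there is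
no continuous nowhere-vanishing vector field near `0` satisfying `⟨ξ(x), x⟩ = 0`. -/
theorem stmt_7 (U : Set (EuclideanSpace ℝ (Fin 3))) (hUopen : IsOpen U)
    (h0 : (0 : EuclideanSpace ℝ (Fin 3)) ∈ U)
    (ξ : EuclideanSpace ℝ (Fin 3) → EuclideanSpace ℝ (Fin 3))
    (hcont : ContinuousOn ξ U)
    (horth : ∀ x ∈ U, ∑ i : Fin 3, ξ x i * x i = 0) :
    ξ 0 = 0 ∧ ¬ (∀ x ∈ U, ξ x ≠ 0) := by
  have hU : U ∈ 𝓝 0 := hUopen.mem_nhds h0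
  have hinner : ∀ᶠ x in 𝓝 0, ⟪ξ x, x⟫ = 0 := by
    filter_upwards [hU] with x hx
    simpa [PiLp.inner_apply, mul_comm] using horth x hx
  have hξ0 : ξ 0 = 0 :=
    eq_zero_of_inner_self_apply_eventually_eq_zero (hcont.continuousAt hU) hinner
  exact ⟨hξ0, fun h => h 0 h0 hξ0⟩
end

section
/- Let f : ℝ² → ℝ² be the fold map f(x, y) = (x, y²). Then the set of homeomorphisms σ : ℝ² → ℝ² satisfying f ∘ σ = f consists of exactly two elements: the identity and the reflection (x, y) ↦ (x, −y). Consequently, the right symmetry group of f is isomorphic to ℤ/2ℤ. -/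
/-!
Write `fold (x, y) = (x, y²)`. A map `σ` with `fold ∘ σ = fold` fixes the first coordinate and
changes the second at most by a sign. If `σ` is continuous, the ratio `(σ p).2 / p.2` is a
continuous `±1`-valued function on the connected upper half-plane, so `σ` is the identity or the
reflection there. If `σ` is moreover injective, it commutes with the reflection, since `σ p` and
`σ (x, -y)` lie in the same two-point fibre and are distinct; this carries the dichotomy over to
the lower half-plane. The symmetry group therefore has exactly two elements.
-/

/-- The right symmetry group of a map `f : X → Y`: the group (under composition) of
self-homeomorphisms `σ` of `X` with `f ∘ σ = f`, realized as a subgroup of the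
group of bijections (permutations) of `X`. -/
def homeoRightSymmetryGroup {X Y : Type*} [TopologicalSpace X] (f : X → Y) :
    Subgroup (Equiv.Perm X) where
  carrier := {e | Continuous e ∧ Continuous e.symm ∧ f ∘ e = f}
  one_mem' := ⟨continuous_id, continuous_id, rfl⟩
  mul_mem' := by
    rintro a b ⟨ha1, ha2, ha3⟩ ⟨hb1, hb2, hb3⟩
    refine ⟨ha1.comp hb1, hb2.comp ha2, ?_⟩
    have : (f ∘ a) ∘ b = f := by rw [ha3, hb3]
    exact this
  inv_mem' := by
    rintro a ⟨ha1, ha2, ha3⟩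
    refine ⟨ha2, ha1, ?_⟩
    funext x
    have := congrFun ha3 (a⁻¹ x)
    simpa using this.symm

namespace Fold

variable {X : Type*}

def fold (p : X × ℝ) : X × ℝ := (p.1, p.2 ^ 2)

def reflect : Equiv.Perm (X × ℝ) := (Equiv.refl X).prodCongr (Equiv.neg ℝ)

@[simp]
lemma reflect_apply (p : X × ℝ) : reflect p = (p.1, -p.2) := rfl

lemma one_ne_reflect [Nonempty X] : (1 : Equiv.Perm (X × ℝ)) ≠ reflect := by
  intro h
  have := congrArg Prod.snd (Equiv.ext_iff.mp h (Classical.arbitrary X, 1))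
  norm_num at this

lemma fold_comp_eq_iff {σ : X × ℝ → X × ℝ} :
    fold ∘ σ = fold ↔ ∀ p, (σ p).1 = p.1 ∧ (σ p).2 ^ 2 = p.2 ^ 2 := by
  simp only [funext_iff, Function.comp_apply, fold, Prod.ext_iff]

lemma fold_comp_reflect : fold ∘ reflect = (fold : X × ℝ → X × ℝ) := by
  simp [fold_comp_eq_iff]

variable {σ : X × ℝ → X × ℝ}

lemma snd_apply_eq_zero_of_fold_comp_eq (h : fold ∘ σ = fold) {p : X × ℝ} (hp : p.2 = 0) :
    (σ p).2 = 0 := by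
  simpa [hp] using (fold_comp_eq_iff.mp h p).2

lemma apply_reflect_of_fold_comp_eq (hinj : σ.Injective) (h : fold ∘ σ = fold) (p : X × ℝ) :
    σ (reflect p) = reflect (σ p) := by
  obtain ⟨hfst, hsq⟩ := fold_comp_eq_iff.mp h p
  obtain ⟨hfst', hsq'⟩ := fold_comp_eq_iff.mp h (reflect p)
  simp only [reflect_apply, neg_sq] at hfst' hsq' ⊢
  refine Prod.ext (hfst'.trans hfst.symm) ?_
  rcases eq_or_eq_neg_of_sq_eq_sq _ _ (hsq'.trans hsq.symm) with heq | hneg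
  · have hfix : reflect p = p := hinj (Prod.ext (hfst'.trans hfst.symm) heq)
    have hp : p.2 = 0 := by
      have : -p.2 = p.2 := congrArg Prod.snd hfix
      linarith
    rw [heq, snd_apply_eq_zero_of_fold_comp_eq h hp, neg_zero]
  · exact hneg

lemma snd_apply_eq_mul_of_forall_pos (hinj : σ.Injective) (h : fold ∘ σ = fold) (c : ℝ)
    (hup : ∀ p : X × ℝ, 0 < p.2 → (σ p).2 = c * p.2) (p : X × ℝ) : (σ p).2 = c * p.2 := by
  rcases lt_trichotomy p.2 0 with hneg | hzero | hpos
  · have hp : (σ p).2 = -(σ (p.1, -p.2)).2 := by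
      simpa using congrArg Prod.snd (apply_reflect_of_fold_comp_eq hinj h (reflect p))
    rw [hp, hup _ (neg_pos.mpr hneg)]
    ring
  · rw [snd_apply_eq_zero_of_fold_comp_eq h hzero, hzero, mul_zero]
  · exact hup p hpos

variable [TopologicalSpace X]

lemma upperHalf_snd_eq_or_eq_neg [PreconnectedSpace X]
    (hσ : Continuous σ) (h : fold ∘ σ = fold) :
    (∀ p : X × ℝ, 0 < p.2 → (σ p).2 = p.2) ∨ ∀ p : X × ℝ, 0 < p.2 → (σ p).2 = -p.2 := by
  have hH : IsPreconnected {p : X × ℝ | 0 < p.2} := by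
    have := (isPreconnected_univ (α := X)).prod (isPreconnected_Ioi (a := (0 : ℝ)))
    rwa [Set.univ_prod] at this
  exact hH.eq_or_eq_neg_of_sq_eq (continuous_snd.comp hσ).continuousOn continuous_snd.continuousOn
    (fun p _ => (fold_comp_eq_iff.mp h p).2) (fun hp => hp.ne')

theorem eq_id_or_eq_reflect_of_fold_comp_eq [PreconnectedSpace X]
    (hσ : Continuous σ) (hinj : σ.Injective) (h : fold ∘ σ = fold) :
    (∀ p, σ p = p) ∨ ∀ p, σ p = (p.1, -p.2) := by
  have hfst p := (fold_comp_eq_iff.mp h p).1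
  rcases upperHalf_snd_eq_or_eq_neg hσ h with hup | hup
  · refine .inl fun p => Prod.ext (hfst p) ?_
    simpa using snd_apply_eq_mul_of_forall_pos hinj h 1 (by simpa using hup) p
  · refine .inr fun p => Prod.ext (hfst p) ?_
    simpa using snd_apply_eq_mul_of_forall_pos hinj h (-1) (by simpa using hup) p

theorem fold_comp_eq_iff_eq_id_or_eq_reflect [PreconnectedSpace X]
    (hσ : Continuous σ) (hinj : σ.Injective) :
    fold ∘ σ = fold ↔ (∀ p, σ p = p) ∨ ∀ p, σ p = (p.1, -p.2) := by
  refine ⟨eq_id_or_eq_reflect_of_fold_comp_eq hσ hinj, ?_⟩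
  rintro (hid | hrefl) <;> refine fold_comp_eq_iff.mpr fun p => ?_
  · simp [hid p]
  · simp [hrefl p]

lemma reflect_mem_homeoRightSymmetryGroup :
    reflect ∈ homeoRightSymmetryGroup (fold : X × ℝ → X × ℝ) :=
  ⟨continuous_id.prodMap continuous_neg, continuous_id.prodMap continuous_neg, fold_comp_reflect⟩

theorem coe_homeoRightSymmetryGroup_fold [PreconnectedSpace X] :
    (homeoRightSymmetryGroup (fold : X × ℝ → X × ℝ) : Set (Equiv.Perm (X × ℝ))) = {1, reflect} := by
  ext e
  constructor
  · rintro ⟨he, -, hfold⟩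
    rcases eq_id_or_eq_reflect_of_fold_comp_eq he e.injective hfold with hid | hrefl
    · exact .inl (Equiv.ext hid)
    · exact .inr (Equiv.ext hrefl)
  · rintro (rfl | rfl)
    · exact Subgroup.one_mem _
    · exact reflect_mem_homeoRightSymmetryGroup

theorem card_homeoRightSymmetryGroup_fold [PreconnectedSpace X] [Nonempty X] :
    Nat.card (homeoRightSymmetryGroup (fold : X × ℝ → X × ℝ)) = 2 := by
  rw [← SetLike.coe_sort_coe, coe_homeoRightSymmetryGroup_fold, Nat.card_coe_set_eq,
    Set.ncard_pair one_ne_reflect]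

end Fold

/-- For the fold map `f (x, y) = (x, y²)` on `ℝ²`, the homeomorphisms
`σ` of `ℝ²` with `f ∘ σ = f` are exactly the identity and the reflection
`(x, y) ↦ (x, -y)`; consequently the right symmetry group of `f` is isomorphic
to `ℤ/2ℤ`. -/
theorem stmt_8 :
    (∀ σ : (ℝ × ℝ) ≃ₜ (ℝ × ℝ),
        (fun p : ℝ × ℝ => (p.1, p.2 ^ 2)) ∘ σ = (fun p : ℝ × ℝ => (p.1, p.2 ^ 2)) ↔
          ((∀ p : ℝ × ℝ, σ p = p) ∨ (∀ p : ℝ × ℝ, σ p = (p.1, -p.2)))) ∧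
    Nonempty ((homeoRightSymmetryGroup (fun p : ℝ × ℝ => (p.1, p.2 ^ 2)))
        ≃* Multiplicative (ZMod 2)) :=
  ⟨fun σ => Fold.fold_comp_eq_iff_eq_id_or_eq_reflect σ.continuous σ.injective,
    ⟨mulEquivOfPrimeCardEq Fold.card_homeoRightSymmetryGroup_fold (by simp)⟩⟩
end
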